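/- (Proposition 4.1) Suppose the Lanczos L-biorthogonalization data up to step m exists. Let D, X_0 be tensors with R_0 = D − L(X_0) ≠ 0 and V_1 = R_0/‖R_0‖, and let D*, X_0* be tensors with R_0* = D* − L^T(X_0*) ≠ 0 and W_1 = R_0*/‖R_0*‖. For 1 ≤ i ≤ m−1, let X_i = X_0 + Σ_{k=1}^i (y^{(i)})_k V_k where y^{(i)} ∈ ℝ^i solves T_i y^{(i)} = ‖R_0‖ e_1, and set R_i = D − L(X_i); similarly let X_j* = X_0* + Σ_{k=1}^j (y*^{(j)})_k W_k where y*^{(j)} ∈ ℝ^j solves T_jᵀ y*^{(j)} = ‖R_0*‖ e_1, and set R_j* = D* − L^T(X_j*). Then ⟨L(R_i), R_j*⟩ = 0 for all 0 ≤ i, j ≤ m−1 with i ≠ j. -/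
import Mathlib


open scoped Matrix

/-- A tensor in `ℝ^{I₁ × ⋯ × I_N}`: a real-valued function on multi-indices. -/
abbrev Tensor {N : ℕ} (I : Fin N → ℕ) := (∀ n, Fin (I n)) → ℝ

/-- Inner product `⟨X, Y⟩ = ∑ᵢ X(i) Y(i)`. -/
noncomputable def tinner {N : ℕ} {I : Fin N → ℕ} (X Y : Tensor I) : ℝ :=
  ∑ i : ∀ n, Fin (I n), X i * Y i

/-- Norm `‖X‖ = ⟨X, X⟩^{1/2}`. -/
noncomputable def tnorm {N : ℕ} {I : Fin N → ℕ} (X : Tensor I) : ℝ :=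
  Real.sqrt (tinner X X)

/-- The Sylvester operator `L(X) = X ×₁ A₁ + ⋯ + X ×_N A_N`. -/
noncomputable def sylvOp {N : ℕ} {I : Fin N → ℕ}
    (A : ∀ n, Matrix (Fin (I n)) (Fin (I n)) ℝ) (X : Tensor I) : Tensor I :=
  fun i => ∑ n : Fin N, ∑ j : Fin (I n), A n (i n) j * X (Function.update i n j)

/-- The transposed Sylvester operator `L^T`, with each `Aₙ` replaced by `Aₙᵀ`. -/
noncomputable def sylvOpT {N : ℕ} {I : Fin N → ℕ}
    (A : ∀ n, Matrix (Fin (I n)) (Fin (I n)) ℝ) : Tensor I → Tensor I :=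
  sylvOp (fun n => (A n)ᵀ)

/-- The Lanczos `L`-biorthogonalization data up to step `m` (Algorithm 1),
with no breakdown: `δ_{j+1} ≠ 0` and `β_{j+1} ≠ 0` for `j = 1,…,m`. -/
structure LanczosData {N : ℕ} {I : Fin N → ℕ}
    (A : ∀ n, Matrix (Fin (I n)) (Fin (I n)) ℝ) (m : ℕ) where
  V : ℕ → Tensor I
  W : ℕ → Tensor I
  Vb : ℕ → Tensor I
  Wb : ℕ → Tensor I
  α : ℕ → ℝ
  δ : ℕ → ℝ
  β : ℕ → ℝ
  hV0 : V 0 = 0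
  hW0 : W 0 = 0
  hδ1 : δ 1 = 0
  hβ1 : β 1 = 0
  hWLV1 : tinner (W 1) (sylvOp A (V 1)) = 1
  hα : ∀ j, 1 ≤ j → j ≤ m →
    α j = tinner (sylvOp A (sylvOp A (V j))) (W j)
  hVb : ∀ j, 1 ≤ j → j ≤ m →
    Vb (j + 1) = sylvOp A (V j) - α j • V j - β j • V (j - 1)
  hWb : ∀ j, 1 ≤ j → j ≤ m →
    Wb (j + 1) = sylvOpT A (W j) - α j • W j - δ j • W (j - 1)
  hδ : ∀ j, 1 ≤ j → j ≤ m →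
    δ (j + 1) = Real.sqrt |tinner (Wb (j + 1)) (sylvOp A (Vb (j + 1)))|
  hδne : ∀ j, 1 ≤ j → j ≤ m → δ (j + 1) ≠ 0
  hβ : ∀ j, 1 ≤ j → j ≤ m →
    β (j + 1) = tinner (Wb (j + 1)) (sylvOp A (Vb (j + 1))) / δ (j + 1)
  hβne : ∀ j, 1 ≤ j → j ≤ m → β (j + 1) ≠ 0
  hVnext : ∀ j, 1 ≤ j → j ≤ m → V (j + 1) = (δ (j + 1))⁻¹ • Vb (j + 1)
  hWnext : ∀ j, 1 ≤ j → j ≤ m → W (j + 1) = (β (j + 1))⁻¹ • Wb (j + 1)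

/-- The `m × m` tridiagonal matrix `T_m` with (1-based) entries
`(T_m)_{jj} = α_j`, `(T_m)_{j,j-1} = δ_j`, `(T_m)_{j,j+1} = β_{j+1}`. -/
noncomputable def triMat (a d b : ℕ → ℝ) (m : ℕ) : Matrix (Fin m) (Fin m) ℝ :=
  Matrix.of fun i j =>
    if (i : ℕ) = (j : ℕ) then a ((i : ℕ) + 1)
    else if (i : ℕ) = (j : ℕ) + 1 then d ((i : ℕ) + 1)
    else if (i : ℕ) + 1 = (j : ℕ) then b ((j : ℕ) + 1)
    else 0

/-! ### Auxiliary lemmas -/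

section TLBAux

variable {N : ℕ} {I : Fin N → ℕ} (A : ∀ n, Matrix (Fin (I n)) (Fin (I n)) ℝ)

lemma tinner_comm (X Y : Tensor I) : tinner X Y = tinner Y X := by
  unfold tinner; exact Finset.sum_congr rfl fun i _ => mul_comm _ _

lemma tinner_smul_left (c : ℝ) (X Y : Tensor I) : tinner (c • X) Y = c * tinner X Y := by
  unfold tinner; rw [Finset.mul_sum]
  exact Finset.sum_congr rfl fun i _ => by simp [mul_assoc]

lemma tinner_smul_right (c : ℝ) (X Y : Tensor I) : tinner X (c • Y) = c * tinner X Y := by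
  rw [tinner_comm, tinner_smul_left, tinner_comm]

lemma tinner_add_right (X Y Z : Tensor I) : tinner X (Y + Z) = tinner X Y + tinner X Z := by
  unfold tinner; rw [← Finset.sum_add_distrib]
  exact Finset.sum_congr rfl fun i _ => by simp [mul_add]

lemma tinner_add_left (X Y Z : Tensor I) : tinner (X + Y) Z = tinner X Z + tinner Y Z := by
  rw [tinner_comm, tinner_add_right, tinner_comm X Z, tinner_comm Y Z]

lemma tinner_sub_right (X Y Z : Tensor I) : tinner X (Y - Z) = tinner X Y - tinner X Z := by
  unfold tinner; rw [← Finset.sum_sub_distrib]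
  exact Finset.sum_congr rfl fun i _ => by simp [mul_sub]

lemma tinner_sub_left (X Y Z : Tensor I) : tinner (X - Y) Z = tinner X Z - tinner Y Z := by
  rw [tinner_comm, tinner_sub_right, tinner_comm X Z, tinner_comm Y Z]

lemma tinner_zero_right (X : Tensor I) : tinner X 0 = 0 := by
  unfold tinner; simp

lemma tinner_zero_left (X : Tensor I) : tinner 0 X = 0 := by
  rw [tinner_comm]; exact tinner_zero_right X

/-- `sylvOp` as a linear map. -/
noncomputable def sylvLM : Tensor I →ₗ[ℝ] Tensor I where
  toFun := sylvOp A
  map_add' X Y := by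
    funext i
    simp only [sylvOp, Pi.add_apply, mul_add, Finset.sum_add_distrib]
  map_smul' c X := by
    funext i
    simp only [sylvOp, Pi.smul_apply, smul_eq_mul, RingHom.id_apply, Finset.mul_sum]
    exact Finset.sum_congr rfl fun n _ => Finset.sum_congr rfl fun j _ => by ring

lemma sylvOp_eq_LM : sylvOp A = sylvLM A := rfl

lemma sylvOp_smul (c : ℝ) (X : Tensor I) : sylvOp A (c • X) = c • sylvOp A X :=
  (sylvLM A).map_smul c X

lemma sylvOp_sub (X Y : Tensor I) : sylvOp A (X - Y) = sylvOp A X - sylvOp A Y :=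
  (sylvLM A).map_sub X Y

lemma sylvOp_add (X Y : Tensor I) : sylvOp A (X + Y) = sylvOp A X + sylvOp A Y :=
  (sylvLM A).map_add X Y

/-- The reindexing involution used for the adjoint identity. -/
def updEquiv (n : Fin N) : ((∀ k, Fin (I k)) × Fin (I n)) ≃ ((∀ k, Fin (I k)) × Fin (I n)) where
  toFun p := (Function.update p.1 n p.2, p.1 n)
  invFun p := (Function.update p.1 n p.2, p.1 n)
  left_inv p := by simp [Function.update_idem]
  right_inv p := by simp [Function.update_idem]

/-- `L` and `Lᵀ` are adjoint with respect to `tinner`. -/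
lemma tinner_sylvOp_adjoint (X Y : Tensor I) :
    tinner X (sylvOp A Y) = tinner (sylvOpT A X) Y := by
  calc tinner X (sylvOp A Y)
      = ∑ i : ∀ k, Fin (I k), ∑ n : Fin N, ∑ j : Fin (I n),
          X i * (A n (i n) j * Y (Function.update i n j)) := by
        simp only [tinner, sylvOp, Finset.mul_sum]
    _ = ∑ n : Fin N, ∑ i : ∀ k, Fin (I k), ∑ j : Fin (I n),
          X i * (A n (i n) j * Y (Function.update i n j)) := Finset.sum_comm
    _ = ∑ n : Fin N, ∑ i : ∀ k, Fin (I k), ∑ j : Fin (I n),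
          ((A n)ᵀ (i n) j * X (Function.update i n j)) * Y i := by
        refine Finset.sum_congr rfl fun n _ => ?_
        refine (Fintype.sum_prod_type' (f := fun i j =>
            X i * (A n (i n) j * Y (Function.update i n j)))).symm.trans ?_
        refine (Fintype.sum_equiv (updEquiv n) _
            (fun p => ((A n)ᵀ (p.1 n) p.2 * X (Function.update p.1 n p.2)) * Y p.1)
            fun p => ?_).trans (Fintype.sum_prod_type' (f := fun i j =>
            ((A n)ᵀ (i n) j * X (Function.update i n j)) * Y i))
        simp only [updEquiv, Equiv.coe_fn_mk, Matrix.transpose_apply, Function.update_self,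
          Function.update_idem, Function.update_eq_self]
        ring
    _ = ∑ i : ∀ k, Fin (I k), ∑ n : Fin N, ∑ j : Fin (I n),
          ((A n)ᵀ (i n) j * X (Function.update i n j)) * Y i := Finset.sum_comm
    _ = tinner (sylvOpT A X) Y := by
        simp only [tinner, sylvOpT, sylvOp, Finset.sum_mul]

variable {m : ℕ}

/-- Three-term recurrence for `L(V_q)`. -/
lemma LV_rec (L : LanczosData A m) (q : ℕ) (h1 : 1 ≤ q) (h2 : q ≤ m) :
    sylvOp A (L.V q) =
      L.δ (q+1) • L.V (q+1) + L.α q • L.V q + L.β q • L.V (q-1) := by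
  have hb := L.hVb q h1 h2
  have hn := L.hVnext q h1 h2
  have hd := L.hδne q h1 h2
  have hVbe : L.δ (q+1) • L.V (q+1) = L.Vb (q+1) := by
    rw [hn, smul_smul, mul_inv_cancel₀ hd, one_smul]
  rw [hVbe, hb]
  abel

/-- Three-term recurrence for `Lᵀ(W_p)`. -/
lemma LTW_rec (L : LanczosData A m) (p : ℕ) (h1 : 1 ≤ p) (h2 : p ≤ m) :
    sylvOpT A (L.W p) =
      L.β (p+1) • L.W (p+1) + L.α p • L.W p + L.δ p • L.W (p-1) := by
  have hb := L.hWb p h1 h2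
  have hn := L.hWnext p h1 h2
  have hd := L.hβne p h1 h2
  have hWbe : L.β (p+1) • L.W (p+1) = L.Wb (p+1) := by
    rw [hn, smul_smul, mul_inv_cancel₀ hd, one_smul]
  rw [hWbe, hb]
  abel

/-- The fundamental `L`-biorthogonality of the Lanczos tensors. -/
lemma lanczos_biorth (L : LanczosData A m) :
    ∀ k, k ≤ m → ∀ p q, 1 ≤ p → p ≤ k → 1 ≤ q → q ≤ k →
      tinner (L.W p) (sylvOp A (L.V q)) = if p = q then 1 else 0 := by
  intro k
  induction k with
  | zero => intro _ p q hp hpk _ _; omega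
  | succ k ih =>
    intro hk1 p q hp hpk hq hqk
    rcases Nat.eq_zero_or_pos k with rfl | hk0
    · have hp1 : p = 1 := by omega
      have hq1 : q = 1 := by omega
      subst hp1; subst hq1
      rw [L.hWLV1, if_pos rfl]
    · have hkm : k ≤ m := by omega
      have IH := ih hkm
      set t := tinner (L.Wb (k+1)) (sylvOp A (L.Vb (k+1))) with ht
      have hδk := L.hδne k hk0 hkm
      have hβk := L.hβne k hk0 hkm
      have hdb : L.δ (k+1) * L.β (k+1) = t := by
        rw [L.hβ k hk0 hkm, ← ht]
        field_simp
      have factA : ∀ p, 1 ≤ p → p ≤ k → tinner (L.W p) (sylvOp A (L.Vb (k+1))) = 0 := by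
        intro p hp1 hpk
        rw [L.hVb k hk0 hkm, sylvOp_sub, sylvOp_sub, sylvOp_smul, sylvOp_smul,
          tinner_sub_right, tinner_sub_right, tinner_smul_right, tinner_smul_right]
        by_cases hpe : p = k
        · subst hpe
          rw [show tinner (L.W p) (sylvOp A (sylvOp A (L.V p))) = L.α p from by
            rw [tinner_comm]; exact (L.hα p hp1 hkm).symm]
          rw [IH p p hp1 le_rfl hp1 le_rfl, if_pos rfl]
          by_cases hk1' : p = 1
          · rw [hk1', L.hβ1]; ring
          · rw [IH p (p-1) hp1 le_rfl (by omega) (by omega), if_neg (by omega)]; ring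
        · have hplt : p < k := by omega
          have hL2 : tinner (L.W p) (sylvOp A (sylvOp A (L.V k))) =
              L.β (p+1) * tinner (L.W (p+1)) (sylvOp A (L.V k))
              + L.α p * tinner (L.W p) (sylvOp A (L.V k))
              + L.δ p * tinner (L.W (p-1)) (sylvOp A (L.V k)) := by
            rw [tinner_sylvOp_adjoint A (L.W p) (sylvOp A (L.V k)),
              LTW_rec A L p hp1 (by omega), tinner_add_left, tinner_add_left,
              tinner_smul_left, tinner_smul_left, tinner_smul_left]
          have e1 : tinner (L.W (p+1)) (sylvOp A (L.V k)) = if p+1 = k then 1 else 0 :=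
            IH (p+1) k (by omega) (by omega) hk0 le_rfl
          have e2 : tinner (L.W p) (sylvOp A (L.V k)) = 0 := by
            rw [IH p k hp1 (by omega) hk0 le_rfl, if_neg (by omega)]
          have e3 : L.δ p * tinner (L.W (p-1)) (sylvOp A (L.V k)) = 0 := by
            by_cases hp1' : p = 1
            · rw [hp1', L.hδ1, zero_mul]
            · rw [IH (p-1) k (by omega) (by omega) hk0 le_rfl, if_neg (by omega), mul_zero]
          have e4 : tinner (L.W p) (sylvOp A (L.V (k-1))) = if p = k-1 then 1 else 0 :=
            IH p (k-1) hp1 (by omega) (by omega) (by omega)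
          rw [hL2, e1, e2, e3, e4]
          have : L.β (p+1) * (if p+1 = k then 1 else 0)
              = L.β k * (if p = k-1 then 1 else 0) := by
            by_cases h : p+1 = k
            · rw [if_pos h, if_pos (by omega), ← h]
            · rw [if_neg h, if_neg (by omega)]; ring
          rw [this]; ring
      have factB : ∀ q, 1 ≤ q → q ≤ k → tinner (L.Wb (k+1)) (sylvOp A (L.V q)) = 0 := by
        intro q hq1 hqk
        rw [L.hWb k hk0 hkm, tinner_sub_left, tinner_sub_left,
          tinner_smul_left, tinner_smul_left,
          ← tinner_sylvOp_adjoint A (L.W k) (sylvOp A (L.V q))]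
        by_cases hqe : q = k
        · subst hqe
          rw [show tinner (L.W q) (sylvOp A (sylvOp A (L.V q))) = L.α q from by
            rw [tinner_comm]; exact (L.hα q hq1 hkm).symm]
          rw [IH q q hq1 le_rfl hq1 le_rfl, if_pos rfl]
          by_cases hk1' : q = 1
          · rw [hk1', L.hδ1]; ring
          · rw [IH (q-1) q (by omega) (by omega) hq1 le_rfl, if_neg (by omega)]; ring
        · have hqlt : q < k := by omega
          have hL2 : tinner (L.W k) (sylvOp A (sylvOp A (L.V q)))
              = L.δ (q+1) * tinner (L.W k) (sylvOp A (L.V (q+1)))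
                + L.α q * tinner (L.W k) (sylvOp A (L.V q))
                + L.β q * tinner (L.W k) (sylvOp A (L.V (q-1))) := by
            conv_lhs => rw [LV_rec A L q hq1 (by omega)]
            rw [sylvOp_add, sylvOp_add,
              sylvOp_smul, sylvOp_smul, sylvOp_smul, tinner_add_right, tinner_add_right,
              tinner_smul_right, tinner_smul_right, tinner_smul_right]
          have e1 : tinner (L.W k) (sylvOp A (L.V (q+1))) = if k = q+1 then 1 else 0 :=
            IH k (q+1) hk0 le_rfl (by omega) (by omega)
          have e2 : tinner (L.W k) (sylvOp A (L.V q)) = 0 := by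
            rw [IH k q hk0 le_rfl hq1 (by omega), if_neg (by omega)]
          have e3 : L.β q * tinner (L.W k) (sylvOp A (L.V (q-1))) = 0 := by
            by_cases hq1' : q = 1
            · rw [hq1', L.hβ1, zero_mul]
            · rw [IH k (q-1) hk0 le_rfl (by omega) (by omega), if_neg (by omega), mul_zero]
          have e4 : tinner (L.W (k-1)) (sylvOp A (L.V q)) = if k-1 = q then 1 else 0 :=
            IH (k-1) q (by omega) (by omega) hq1 (by omega)
          rw [hL2, e1, e2, e3, e4]
          have : L.δ (q+1) * (if k = q+1 then 1 else 0)
              = L.δ k * (if k-1 = q then 1 else 0) := by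
            by_cases h : k = q+1
            · rw [if_pos h, if_pos (by omega), h]
            · rw [if_neg h, if_neg (by omega)]; ring
          rw [this]; ring
      rcases Nat.lt_or_ge p (k+1) with hpk' | hpk'
      · rcases Nat.lt_or_ge q (k+1) with hqk' | hqk'
        · exact IH p q hp (by omega) hq (by omega)
        · have hqe : q = k+1 := by omega
          subst hqe
          rw [L.hVnext k hk0 hkm, sylvOp_smul, tinner_smul_right,
            factA p hp (by omega), mul_zero, if_neg (by omega)]
      · have hpe : p = k+1 := by omega
        subst hpe
        rcases Nat.lt_or_ge q (k+1) with hqk' | hqk'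
        · rw [L.hWnext k hk0 hkm, tinner_smul_left, factB q hq (by omega), mul_zero,
            if_neg (by omega)]
        · have hqe : q = k+1 := by omega
          subst hqe
          rw [L.hWnext k hk0 hkm, L.hVnext k hk0 hkm, sylvOp_smul, tinner_smul_left,
            tinner_smul_right, ← ht, if_pos rfl, ← hdb]
          have hδk1 := L.hδne k hk0 hkm
          have hβk1 := L.hβne k hk0 hkm
          field_simp

end TLBAux


lemma sum_single' (n c : ℕ) (f : ℕ → ℝ) :
    ∑ k ∈ Finset.range n, (if k = c then f k else 0) = if c < n then f c else 0 := by
  rw [Finset.sum_ite_eq' (Finset.range n) c f]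
  simp

/-- Row sum of a tridiagonal-type row in normal form. -/
lemma tri_row_sum (p q r Y : ℕ → ℝ) (i s : ℕ) (h1 : 1 ≤ s) (h2 : s ≤ i)
    (hYtop : ∀ k, i ≤ k → Y k = 0) :
    ∑ k ∈ Finset.range i,
      (if k + 1 = s then p s else if k + 2 = s then q s else if k = s then r s else 0) * Y k
    = (if 2 ≤ s then q s * Y (s - 2) else 0) + p s * Y (s - 1) + r s * Y s := by
  have hsplit : ∀ k, (if k + 1 = s then p s else if k + 2 = s then q s
        else if k = s then r s else 0) * Y k
      = (if k = s - 1 then p s * Y k else 0)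
        + (if k + 2 = s then q s * Y k else 0)
        + (if k = s then r s * Y k else 0) := by
    intro k
    split_ifs <;> first | omega | ring
  rw [Finset.sum_congr rfl fun k _ => hsplit k, Finset.sum_add_distrib, Finset.sum_add_distrib]
  have e1 : ∑ k ∈ Finset.range i, (if k = s - 1 then p s * Y k else 0) = p s * Y (s - 1) := by
    rw [sum_single' i (s-1) (fun k => p s * Y k), if_pos (by omega)]
  have e3 : ∑ k ∈ Finset.range i, (if k = s then r s * Y k else 0) = r s * Y s := by
    rw [sum_single' i s (fun k => r s * Y k)]
    by_cases h : s < i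
    · rw [if_pos h]
    · rw [if_neg h, hYtop s (by omega), mul_zero]
  have e2 : ∑ k ∈ Finset.range i, (if k + 2 = s then q s * Y k else 0)
      = if 2 ≤ s then q s * Y (s - 2) else 0 := by
    by_cases h : 2 ≤ s
    · rw [if_pos h, Finset.sum_congr rfl (fun k _ => show (if k + 2 = s then q s * Y k else 0)
        = (if k = s - 2 then q s * Y k else 0) by split_ifs <;> first | rfl | omega),
        sum_single' i (s-2) (fun k => q s * Y k), if_pos (by omega)]
    · rw [if_neg h]
      refine Finset.sum_eq_zero fun k _ => by rw [if_neg (by omega)]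
  rw [e1, e2, e3]
  ring

lemma sum_recurrence {M : Type*} [AddCommGroup M] [Module ℝ M]
    (v Lv : ℕ → M) (a d b Y : ℕ → ℝ) (i : ℕ) (hi : 1 ≤ i) (ρ : ℝ)
    (hv0 : v 0 = 0) (hb1 : b 1 = 0)
    (hrec : ∀ k, k < i → Lv (k+1) = d (k+2) • v (k+2) + a (k+1) • v (k+1) + b (k+1) • v k)
    (hYtop : ∀ k, i ≤ k → Y k = 0)
    (hrow : ∀ s, 1 ≤ s → s ≤ i →
      (if 2 ≤ s then d s * Y (s-2) else 0) + a s * Y (s-1) + b (s+1) * Y s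
        = if s = 1 then ρ else 0) :
    ∑ k ∈ Finset.range i, Y k • Lv (k+1) = ρ • v 1 + (d (i+1) * Y (i-1)) • v (i+1) := by
  -- coefficient functions
  set cA : ℕ → ℝ := fun s => if 2 ≤ s then Y (s-2) * d s else 0 with hcA
  set cB : ℕ → ℝ := fun s => if 1 ≤ s then Y (s-1) * a s else 0 with hcB
  set cC : ℕ → ℝ := fun s => Y s * b (s+1) with hcC
  have step1 : ∑ k ∈ Finset.range i, Y k • Lv (k+1)
      = ∑ k ∈ Finset.range i, ((Y k * d (k+2)) • v (k+2)
          + (Y k * a (k+1)) • v (k+1) + (Y k * b (k+1)) • v k) := by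
    refine Finset.sum_congr rfl fun k hk => ?_
    rw [hrec k (Finset.mem_range.mp hk)]
    rw [smul_add, smul_add, smul_smul, smul_smul, smul_smul]
  have eA : ∑ s ∈ Finset.range (i+2), cA s • v s
      = ∑ k ∈ Finset.range i, (Y k * d (k+2)) • v (k+2) := by
    rw [Finset.sum_range_succ' (fun s => cA s • v s), Finset.sum_range_succ'
      (fun s => cA (s+1) • v (s+1))]
    have h0 : cA 0 • v 0 = 0 := by simp [hcA]
    have h1 : cA (0+1) • v (0+1) = 0 := by norm_num [hcA]
    rw [h0, h1, add_zero, add_zero]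
    refine Finset.sum_congr rfl fun k _ => ?_
    have : cA (k+1+1) = Y k * d (k+2) := by simp [hcA]
    rw [this]
  have eB : ∑ s ∈ Finset.range (i+2), cB s • v s
      = ∑ k ∈ Finset.range i, (Y k * a (k+1)) • v (k+1) := by
    rw [Finset.sum_range_succ' (fun s => cB s • v s)]
    have h0 : cB 0 • v 0 = 0 := by simp [hcB]
    rw [h0, add_zero, Finset.sum_range_succ]
    have htop : cB (i+1) • v (i+1) = 0 := by
      simp [hcB, hYtop i le_rfl]
    rw [htop, add_zero]
    refine Finset.sum_congr rfl fun k _ => ?_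
    have : cB (k+1) = Y k * a (k+1) := by simp [hcB]
    rw [this]
  have eC : ∑ s ∈ Finset.range (i+2), cC s • v s
      = ∑ k ∈ Finset.range i, (Y k * b (k+1)) • v k := by
    rw [Finset.sum_range_succ, Finset.sum_range_succ]
    have h1 : cC (i+1) • v (i+1) = 0 := by simp [hcC, hYtop (i+1) (by omega)]
    have h2 : cC i • v i = 0 := by simp [hcC, hYtop i le_rfl]
    rw [h1, h2, add_zero, add_zero]
  have step2 : ∑ k ∈ Finset.range i, Y k • Lv (k+1)
      = ∑ s ∈ Finset.range (i+2), (cA s + cB s + cC s) • v s := by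
    rw [step1]
    simp only [add_smul, Finset.sum_add_distrib, eA, eB, eC]
  rw [step2]
  have key : ∀ s, s < i + 2 → (cA s + cB s + cC s) • v s
      = (if s = 1 then ρ • v s else 0) + (if s = i+1 then (d (i+1) * Y (i-1)) • v s else 0) := by
    intro s hs
    rcases Nat.eq_zero_or_pos s with rfl | hs1
    · have : cA 0 + cB 0 + cC 0 = Y 0 * b 1 := by simp [hcA, hcB, hcC]
      rw [this, hb1, mul_zero, zero_smul]
      rw [if_neg (by omega), if_neg (by omega), add_zero]
    rcases Nat.lt_or_ge s (i+1) with hsi | hsi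
    · -- 1 ≤ s ≤ i
      have hco : cA s + cB s + cC s = if s = 1 then ρ else 0 := by
        rw [← hrow s hs1 (by omega)]
        simp only [hcA, hcB, hcC]
        rw [if_pos (show 1 ≤ s from hs1)]
        by_cases h2 : 2 ≤ s
        · rw [if_pos h2, if_pos h2]; ring
        · rw [if_neg h2, if_neg h2]; ring
      rw [hco]
      by_cases h1 : s = 1
      · rw [if_pos h1, if_pos h1, if_neg (show ¬ s = i + 1 by omega), add_zero]
      · rw [if_neg h1, if_neg h1, if_neg (show ¬ s = i + 1 by omega), zero_smul, add_zero]
    · -- s = i+1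
      have hseq : s = i + 1 := by omega
      subst hseq
      have : cA (i+1) + cB (i+1) + cC (i+1) = Y (i-1) * d (i+1) := by
        have hA : cA (i+1) = Y (i-1) * d (i+1) := by
          have e : i + 1 - 2 = i - 1 := by omega
          simp only [hcA, if_pos (show 2 ≤ i + 1 by omega), e]
        have hB : cB (i+1) = 0 := by simp [hcB, hYtop i le_rfl]
        have hC : cC (i+1) = 0 := by simp [hcC, hYtop (i+1) (by omega)]
        rw [hA, hB, hC, add_zero, add_zero]
      rw [this, if_neg (by omega), zero_add, if_pos rfl, mul_comm]
  rw [Finset.sum_congr rfl fun s hs => key s (Finset.mem_range.mp hs),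
    Finset.sum_add_distrib]
  congr 1
  · rw [Finset.sum_ite_eq' (Finset.range (i+2)) 1 (fun s => ρ • v s),
      if_pos (Finset.mem_range.mpr (by omega))]
  · rw [Finset.sum_ite_eq' (Finset.range (i+2)) (i+1) (fun s => (d (i+1) * Y (i-1)) • v s),
      if_pos (Finset.mem_range.mpr (by omega))]

section TLBMain

variable {N : ℕ} {I : Fin N → ℕ}

/-- Positivity of `tnorm` on nonzero tensors. -/
lemma tnorm_ne_zero {X : Tensor I} (hX : X ≠ 0) : tnorm X ≠ 0 := by
  have hpos : 0 < tinner X X := by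
    obtain ⟨x, hx⟩ : ∃ x, X x ≠ 0 := by
      by_contra h
      push_neg at h
      exact hX (funext h)
    unfold tinner
    exact Finset.sum_pos' (fun i _ => mul_self_nonneg _)
      ⟨x, Finset.mem_univ x, mul_self_pos.mpr hx⟩
  unfold tnorm
  exact ne_of_gt (Real.sqrt_pos.mpr hpos)

/-- Conversion of a row of `T_i` applied to `y` into three-term form. -/
lemma primal_row (a d b : ℕ → ℝ) (i : ℕ) (y : Fin i → ℝ) (Y : ℕ → ℝ)
    (hY : ∀ k : Fin i, Y (k : ℕ) = y k) (hYtop : ∀ k, i ≤ k → Y k = 0)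
    (s : ℕ) (hs1 : 1 ≤ s) (hs2 : s ≤ i) (hfin : s - 1 < i) :
    ∑ k : Fin i, triMat a d b i ⟨s-1, hfin⟩ k * y k
      = (if 2 ≤ s then d s * Y (s-2) else 0) + a s * Y (s-1) + b (s+1) * Y s := by
  rw [show ∑ k : Fin i, triMat a d b i ⟨s-1, hfin⟩ k * y k
      = ∑ k ∈ Finset.range i, (if k+1 = s then a s else if k+2 = s then d s
          else if k = s then b (s+1) else 0) * Y k from ?_]
  · exact tri_row_sum a d (fun t => b (t+1)) Y i s hs1 hs2 hYtop
  · rw [← Fin.sum_univ_eq_sum_range (fun k => (if k+1 = s then a s else if k+2 = s then d s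
      else if k = s then b (s+1) else 0) * Y k) i]
    refine Finset.sum_congr rfl fun k _ => ?_
    rw [← hY k]
    congr 1
    simp only [triMat, Matrix.of_apply]
    split_ifs <;> first | rfl | omega | (congr 1 <;> omega)

/-- Conversion of a row of `T_j`ᵀ applied to `ys` into three-term form. -/
lemma dual_row (a d b : ℕ → ℝ) (i : ℕ) (y : Fin i → ℝ) (Y : ℕ → ℝ)
    (hY : ∀ k : Fin i, Y (k : ℕ) = y k) (hYtop : ∀ k, i ≤ k → Y k = 0)
    (s : ℕ) (hs1 : 1 ≤ s) (hs2 : s ≤ i) (hfin : s - 1 < i) :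
    ∑ k : Fin i, (triMat a d b i)ᵀ ⟨s-1, hfin⟩ k * y k
      = (if 2 ≤ s then b s * Y (s-2) else 0) + a s * Y (s-1) + d (s+1) * Y s := by
  rw [show ∑ k : Fin i, (triMat a d b i)ᵀ ⟨s-1, hfin⟩ k * y k
      = ∑ k ∈ Finset.range i, (if k+1 = s then a s else if k+2 = s then b s
          else if k = s then d (s+1) else 0) * Y k from ?_]
  · exact tri_row_sum a b (fun t => d (t+1)) Y i s hs1 hs2 hYtop
  · rw [← Fin.sum_univ_eq_sum_range (fun k => (if k+1 = s then a s else if k+2 = s then b s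
      else if k = s then d (s+1) else 0) * Y k) i]
    refine Finset.sum_congr rfl fun k _ => ?_
    rw [← hY k]
    congr 1
    simp only [triMat, Matrix.transpose_apply, Matrix.of_apply]
    split_ifs <;> first | rfl | omega | (congr 1 <;> omega)

end TLBMain

/-- Proposition 4.1: the TLB residuals `R_i` and dual residuals
`R_j*` (for `0 ≤ i, j ≤ m-1`) satisfy `⟨L(R_i), R_j*⟩ = 0` whenever `i ≠ j`. -/
theorem tlb_residual_biorthogonal {N : ℕ} (hN : 1 ≤ N) (I : Fin N → ℕ)
    (hI : ∀ n, 0 < I n)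
    (A : ∀ n, Matrix (Fin (I n)) (Fin (I n)) ℝ) (m : ℕ) (hm : 1 ≤ m)
    (L : LanczosData A m) (D X0 Ds X0s R0 R0s : Tensor I)
    (hR0 : R0 = D - sylvOp A X0) (hR0ne : R0 ≠ 0)
    (hR0s : R0s = Ds - sylvOpT A X0s) (hR0sne : R0s ≠ 0)
    (hV1 : L.V 1 = (tnorm R0)⁻¹ • R0) (hW1 : L.W 1 = (tnorm R0s)⁻¹ • R0s)
    (R Rs : ℕ → Tensor I) (hRzero : R 0 = R0) (hRszero : Rs 0 = R0s)
    (y ys : (i : ℕ) → Fin i → ℝ)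
    (hy : ∀ i, 1 ≤ i → i ≤ m - 1 → ∀ r : Fin i,
      ∑ k : Fin i, triMat L.α L.δ L.β i r k * y i k =
        if (r : ℕ) = 0 then tnorm R0 else 0)
    (hR : ∀ i, 1 ≤ i → i ≤ m - 1 →
      R i = D - sylvOp A (X0 + ∑ k : Fin i, y i k • L.V ((k : ℕ) + 1)))
    (hys : ∀ j, 1 ≤ j → j ≤ m - 1 → ∀ r : Fin j,
      ∑ k : Fin j, (triMat L.α L.δ L.β j)ᵀ r k * ys j k =
        if (r : ℕ) = 0 then tnorm R0s else 0)
    (hRs : ∀ j, 1 ≤ j → j ≤ m - 1 →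
      Rs j = Ds - sylvOpT A (X0s + ∑ k : Fin j, ys j k • L.W ((k : ℕ) + 1)))
    (i j : ℕ) (hi : i ≤ m - 1) (hj : j ≤ m - 1) (hij : i ≠ j) :
    tinner (sylvOp A (R i)) (Rs j) = 0 := by
  have him : i + 1 ≤ m := by omega
  have hjm : j + 1 ≤ m := by omega
  have hρ := tnorm_ne_zero hR0ne
  have hρs := tnorm_ne_zero hR0sne
  have hR0V : R0 = tnorm R0 • L.V 1 := by
    rw [hV1, smul_smul, mul_inv_cancel₀ hρ, one_smul]
  have hR0W : R0s = tnorm R0s • L.W 1 := by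
    rw [hW1, smul_smul, mul_inv_cancel₀ hρs, one_smul]
  -- the primal residual is a multiple of `V (i+1)`
  have claimP : ∃ c : ℝ, R i = c • L.V (i+1) := by
    rcases Nat.eq_zero_or_pos i with rfl | hi1
    · exact ⟨tnorm R0, by rw [hRzero]; exact hR0V⟩
    · set Y : ℕ → ℝ := fun k => if h : k < i then y i ⟨k, h⟩ else 0 with hYdef
      have hYk : ∀ k : Fin i, Y (k : ℕ) = y i k := by
        intro k
        simp only [hYdef, k.isLt, dif_pos, Fin.eta]
      have hYtop : ∀ k, i ≤ k → Y k = 0 := fun k hk => dif_neg (by omega)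
      have hstepA : R i = R0 - ∑ k ∈ Finset.range i, Y k • sylvOp A (L.V (k+1)) := by
        rw [hR i hi1 hi, hR0, sylvOp_add]
        have hS : sylvOp A (∑ k : Fin i, y i k • L.V ((k : ℕ)+1))
            = ∑ k ∈ Finset.range i, Y k • sylvOp A (L.V (k+1)) := by
          rw [sylvOp_eq_LM, map_sum,
            ← Fin.sum_univ_eq_sum_range (fun k => Y k • sylvLM A (L.V (k+1))) i]
          refine Finset.sum_congr rfl fun k _ => ?_
          rw [(sylvLM A).map_smul, hYk k]
        rw [hS]
        abel
      have hrec : ∀ k, k < i → sylvOp A (L.V (k+1))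
          = L.δ (k+2) • L.V (k+2) + L.α (k+1) • L.V (k+1) + L.β (k+1) • L.V k :=
        fun k hk => LV_rec A L (k+1) (by omega) (by omega)
      have hrow : ∀ s, 1 ≤ s → s ≤ i →
          (if 2 ≤ s then L.δ s * Y (s-2) else 0) + L.α s * Y (s-1) + L.β (s+1) * Y s
            = if s = 1 then tnorm R0 else 0 := by
        intro s hs1 hs2
        have hfin : s - 1 < i := by omega
        rw [← primal_row L.α L.δ L.β i (y i) Y hYk hYtop s hs1 hs2 hfin,
          hy i hi1 hi ⟨s-1, hfin⟩,
          show ((⟨s-1, hfin⟩ : Fin i) : ℕ) = s - 1 from rfl]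
        by_cases h : s = 1
        · rw [if_pos (show s-1 = 0 by omega), if_pos h]
        · rw [if_neg (show ¬ s-1 = 0 by omega), if_neg h]
      have hsum := sum_recurrence L.V (fun n => sylvOp A (L.V n)) L.α L.δ L.β Y i hi1
        (tnorm R0) L.hV0 L.hβ1 hrec hYtop hrow
      refine ⟨-(L.δ (i+1) * Y (i-1)), ?_⟩
      rw [hstepA, hsum, ← hR0V, neg_smul]
      abel
  -- the dual residual is a multiple of `W (j+1)`
  have claimD : ∃ c : ℝ, Rs j = c • L.W (j+1) := by
    rcases Nat.eq_zero_or_pos j with rfl | hj1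
    · exact ⟨tnorm R0s, by rw [hRszero]; exact hR0W⟩
    · set Y : ℕ → ℝ := fun k => if h : k < j then ys j ⟨k, h⟩ else 0 with hYdef
      have hYk : ∀ k : Fin j, Y (k : ℕ) = ys j k := by
        intro k
        simp only [hYdef, k.isLt, dif_pos, Fin.eta]
      have hYtop : ∀ k, j ≤ k → Y k = 0 := fun k hk => dif_neg (by omega)
      have hT : sylvOpT A = sylvOp (fun n => (A n)ᵀ) := rfl
      have hstepA : Rs j = R0s - ∑ k ∈ Finset.range j, Y k • sylvOpT A (L.W (k+1)) := by
        rw [hRs j hj1 hj, hR0s, hT, sylvOp_add]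
        have hS : sylvOp (fun n => (A n)ᵀ) (∑ k : Fin j, ys j k • L.W ((k : ℕ)+1))
            = ∑ k ∈ Finset.range j, Y k • sylvOp (fun n => (A n)ᵀ) (L.W (k+1)) := by
          rw [sylvOp_eq_LM, map_sum,
            ← Fin.sum_univ_eq_sum_range
              (fun k => Y k • sylvLM (fun n => (A n)ᵀ) (L.W (k+1))) j]
          refine Finset.sum_congr rfl fun k _ => ?_
          rw [(sylvLM (fun n => (A n)ᵀ)).map_smul, hYk k]
        rw [hS]
        abel
      have hrec : ∀ k, k < j → sylvOpT A (L.W (k+1))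
          = L.β (k+2) • L.W (k+2) + L.α (k+1) • L.W (k+1) + L.δ (k+1) • L.W k :=
        fun k hk => LTW_rec A L (k+1) (by omega) (by omega)
      have hrow : ∀ s, 1 ≤ s → s ≤ j →
          (if 2 ≤ s then L.β s * Y (s-2) else 0) + L.α s * Y (s-1) + L.δ (s+1) * Y s
            = if s = 1 then tnorm R0s else 0 := by
        intro s hs1 hs2
        have hfin : s - 1 < j := by omega
        rw [← dual_row L.α L.δ L.β j (ys j) Y hYk hYtop s hs1 hs2 hfin,
          hys j hj1 hj ⟨s-1, hfin⟩,
          show ((⟨s-1, hfin⟩ : Fin j) : ℕ) = s - 1 from rfl]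
        by_cases h : s = 1
        · rw [if_pos (show s-1 = 0 by omega), if_pos h]
        · rw [if_neg (show ¬ s-1 = 0 by omega), if_neg h]
      have hsum := sum_recurrence L.W (fun n => sylvOpT A (L.W n)) L.α L.β L.δ Y j hj1
        (tnorm R0s) L.hW0 L.hδ1 hrec hYtop hrow
      refine ⟨-(L.β (j+1) * Y (j-1)), ?_⟩
      rw [hstepA, hsum, ← hR0W, neg_smul]
      abel
  obtain ⟨c, hc⟩ := claimP
  obtain ⟨c', hc'⟩ := claimD
  rw [hc, hc', sylvOp_smul, tinner_smul_left, tinner_smul_right, tinner_comm,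
    lanczos_biorth A L m le_rfl (j+1) (i+1) (by omega) hjm (by omega) him,
    if_neg (by omega)]
  ring
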